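/- Let (P^N) be a sequence of nonzero orthogonal projections concentrating at x = (x_k)_{k∈K}. Then for every finite subset R = {k_1, …, k_r} ⊆ K, every complex numbers λ_{k_1}, …, λ_{k_r}, and every fixed ordering of the factors, lim_{N→∞} tr^N( e^{λ_{k_1}(X^N_{k_1} − x_{k_1})} e^{λ_{k_2}(X^N_{k_2} − x_{k_2})} ⋯ e^{λ_{k_r}(X^N_{k_r} − x_{k_r})} | P^N ) = 1, where e^{M} is the matrix exponential. -/

import Mathlib

open scoped Matrix Matrix.Norms.L2Operator ComplexOrder

/-- `P` is an orthogonal projection matrix. -/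
def IsProjection {d : ℕ} (P : Matrix (Fin d) (Fin d) ℂ) : Prop :=
  P.IsHermitian ∧ P * P = P

/-- `σ` is a density matrix (a state). -/
def IsDensity {d : ℕ} (σ : Matrix (Fin d) (Fin d) ℂ) : Prop :=
  σ.PosSemidef ∧ σ.trace = 1

/-- Expectation of `A` in the state with density matrix `σ`. -/
noncomputable def expVal {d : ℕ} (σ A : Matrix (Fin d) (Fin d) ℂ) : ℂ :=
  (σ * A).trace

/-- Normalized trace state on the range of the projection `P`:
`tr(A | P) = Tr(P A P) / Tr(P)`. -/
noncomputable def condTr {d : ℕ} (P A : Matrix (Fin d) (Fin d) ℂ) : ℂ :=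
  (P * A * P).trace / P.trace

/-- Total functional calculus on matrices: applies `f` to a Hermitian matrix via the
spectral decomposition and returns `0` on non-Hermitian matrices. -/
noncomputable def fc {d : ℕ} (f : ℝ → ℝ) (A : Matrix (Fin d) (Fin d) ℂ) :
    Matrix (Fin d) (Fin d) ℂ :=
  if h : A.IsHermitian then h.cfc f else 0

/-- The spectral projection of a Hermitian matrix onto the Borel set `S ⊆ ℝ`. -/
noncomputable def specProj {d : ℕ} (S : Set ℝ) (A : Matrix (Fin d) (Fin d) ℂ) :
    Matrix (Fin d) (Fin d) ℂ :=
  fc (S.indicator 1) A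

/-- The von Neumann entropy `−Tr(σ log σ)` (with the convention `0 log 0 = 0`,
which is automatic since `Real.log 0 = 0`). -/
noncomputable def vnEntropy {d : ℕ} (σ : Matrix (Fin d) (Fin d) ℂ) : ℝ :=
  -((σ * fc Real.log σ).trace.re)

/-- The quantum relative entropy `Tr(σ (log σ − log σ₀))` of density matrices. -/
noncomputable def relEntropy {d : ℕ} (σ σ₀ : Matrix (Fin d) (Fin d) ℂ) : ℝ :=
  ((σ * (fc Real.log σ - fc Real.log σ₀)).trace.re)

section Seq
variable (d : ℕ → ℕ) {K : Type*} (X : ∀ N, K → Matrix (Fin (d N)) (Fin (d N)) ℂ)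

/-- The sequence of projections `(P N)` concentrates at `x` (written `P^N →mc x`):
each `P N` is a nonzero orthogonal projection and for every index `k` and every
continuous `F : ℝ → ℝ`, `tr(F(X^N_k) | P^N) → F(x_k)`. -/
def ConcProj (P : ∀ N, Matrix (Fin (d N)) (Fin (d N)) ℂ) (x : K → ℝ) : Prop :=
  (∀ N, IsProjection (P N) ∧ P N ≠ 0) ∧
  ∀ (k : K) (F : ℝ → ℝ), Continuous F →
    Filter.Tendsto (fun N => condTr (P N) (fc F (X N k))) Filter.atTop (nhds (F (x k) : ℂ))

/-- Microcanonical H-function: the supremum over sequences of projections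
concentrating at `x` of `limsup (1/N) log Tr(P^N)` (`⊥ = −∞` if none exists). -/
noncomputable def Hmc (x : K → ℝ) : EReal :=
  sSup { h | ∃ P : ∀ N, Matrix (Fin (d N)) (Fin (d N)) ℂ, ConcProj d X P x ∧
    h = Filter.limsup (fun N : ℕ => (((N : ℝ)⁻¹ * Real.log ((P N).trace.re) : ℝ) : EReal))
      Filter.atTop }

/-- A microcanonical macrostate at `x`: a concentrating sequence of projections
attaining the supremum in `Hmc`. -/
def IsMicroMacrostate (P : ∀ N, Matrix (Fin (d N)) (Fin (d N)) ℂ) (x : K → ℝ) : Prop :=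
  ConcProj d X P x ∧
  (Filter.limsup (fun N : ℕ => (((N : ℝ)⁻¹ * Real.log ((P N).trace.re) : ℝ) : EReal))
      Filter.atTop) = Hmc d X x

/-- The sequence of states given by density matrices `(σ N)` concentrates at `x`
(`ω^N → x`): expectations of all noncommutative monomials in the macroscopic
observables converge to the corresponding products of the values `x_k`. -/
def ConcState (σ : ∀ N, Matrix (Fin (d N)) (Fin (d N)) ℂ) (x : K → ℝ) : Prop :=
  (∀ N, IsDensity (σ N)) ∧
  ∀ L : List K,
    Filter.Tendsto (fun N => expVal (σ N) ((L.map (X N)).prod)) Filter.atTop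
      (nhds (((L.map x).prod : ℝ) : ℂ))

/-- The sequence of states `(σ N)` concentrates in the mean at `x` (`ω^N →1 x`). -/
def ConcMean (σ : ∀ N, Matrix (Fin (d N)) (Fin (d N)) ℂ) (x : K → ℝ) : Prop :=
  (∀ N, IsDensity (σ N)) ∧
  ∀ k : K, Filter.Tendsto (fun N => expVal (σ N) (X N k)) Filter.atTop (nhds (x k : ℂ))

/-- Canonical H-function: supremum of `limsup (1/N) 𝓗(ω^N)` over `ω^N → x`. -/
noncomputable def Hcan (x : K → ℝ) : EReal :=
  sSup { h | ∃ σ : ∀ N, Matrix (Fin (d N)) (Fin (d N)) ℂ, ConcState d X σ x ∧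
    h = Filter.limsup (fun N : ℕ => (((N : ℝ)⁻¹ * vnEntropy (σ N) : ℝ) : EReal)) Filter.atTop }

/-- Canonical H-function in the mean: supremum of `limsup (1/N) 𝓗(ω^N)` over `ω^N →1 x`. -/
noncomputable def Hcan1 (x : K → ℝ) : EReal :=
  sSup { h | ∃ σ : ∀ N, Matrix (Fin (d N)) (Fin (d N)) ℂ, ConcMean d X σ x ∧
    h = Filter.limsup (fun N : ℕ => (((N : ℝ)⁻¹ * vnEntropy (σ N) : ℝ) : EReal)) Filter.atTop }

/-- A canonical macrostate at `x`: a sequence of states concentrating in the mean at `x`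
whose entropy density attains the supremum in `Hcan1`. -/
def IsCanMacrostate (σ : ∀ N, Matrix (Fin (d N)) (Fin (d N)) ℂ) (x : K → ℝ) : Prop :=
  ConcMean d X σ x ∧
  (Filter.limsup (fun N : ℕ => (((N : ℝ)⁻¹ * vnEntropy (σ N) : ℝ) : EReal)) Filter.atTop)
    = Hcan1 d X x

/-- Relative canonical H-function with respect to a reference sequence of faithful
states `ρ`: the infimum of `liminf (1/N) 𝓗(ω^N | ρ^N)` over `ω^N →1 x` (`⊤` if none). -/
noncomputable def Hcan1Rel (ρ : ∀ N, Matrix (Fin (d N)) (Fin (d N)) ℂ) (x : K → ℝ) : EReal :=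
  sInf { h | ∃ σ : ∀ N, Matrix (Fin (d N)) (Fin (d N)) ℂ, ConcMean d X σ x ∧
    h = Filter.liminf (fun N : ℕ => (((N : ℝ)⁻¹ * relEntropy (σ N) (ρ N) : ℝ) : EReal))
      Filter.atTop }

end Seq


/-!
Applying concentration to `F s = (s - x_k)²` gives `tr((X_k - x_k)² | P) → 0`. Write each factor as
`e^{λa} = 1 + b a` with `‖b‖ ≤ e^{‖λa‖}` and telescope the ordered product from the right: every
error term then has the form `tr(M a | P)` with `M` bounded uniformly in `N`, and the Cauchy–Schwarz
inequality for the state `tr(· | P)` bounds it by `‖M‖ tr(a² | P)^{1/2}`.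
-/

namespace NormedSpace

open scoped Nat

variable {𝔸 : Type*} [NormedRing 𝔸] [NormedAlgebra ℂ 𝔸] [NormOneClass 𝔸]

lemma norm_inv_factorial_smul_pow_le (x : 𝔸) (n : ℕ) :
    ‖((n ! : ℂ)⁻¹) • x ^ n‖ ≤ ‖x‖ ^ n / n ! := by
  rw [norm_smul, norm_inv, Complex.norm_natCast, inv_mul_eq_div]
  gcongr
  exact norm_pow_le x n

lemma norm_exp_le_exp_norm (x : 𝔸) : ‖exp x‖ ≤ Real.exp ‖x‖ := by
  rw [exp_eq_tsum (𝕂 := ℂ), Real.exp_eq_exp_ℝ, exp_eq_tsum_div]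
  exact tsum_of_norm_bounded (Real.summable_pow_div_factorial ‖x‖).hasSum
    (norm_inv_factorial_smul_pow_le x)

lemma norm_list_prod_exp_le {r : ℕ} (x : Fin r → 𝔸) :
    ‖(List.ofFn fun i => exp (x i)).prod‖ ≤ Real.exp (∑ i, ‖x i‖) := by
  refine (List.norm_prod_le _).trans ?_
  rw [List.map_ofFn, List.prod_ofFn, Real.exp_sum]
  exact Finset.prod_le_prod (fun _ _ => norm_nonneg _) fun i _ => norm_exp_le_exp_norm (x i)

variable [CompleteSpace 𝔸]

/-- The witness is `b = ∑ xⁿ / (n + 1)!`. -/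
lemma exists_exp_eq_one_add_mul_and_norm_le (x : 𝔸) :
    ∃ b : 𝔸, exp x = 1 + b * x ∧ ‖b‖ ≤ Real.exp ‖x‖ := by
  set g : ℕ → 𝔸 := fun n => ((n + 1)! : ℂ)⁻¹ • x ^ n
  have hg : ∀ n, ‖g n‖ ≤ ‖x‖ ^ n / n ! := fun n => by
    refine (norm_smul_le _ _).trans ?_
    rw [norm_inv, Complex.norm_natCast, inv_mul_eq_div]
    gcongr
    · exact norm_pow_le x n
    · omega
  have hmaj := Real.summable_pow_div_factorial ‖x‖
  refine ⟨∑' n, g n, ?_, ?_⟩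
  · rw [exp_eq_tsum (𝕂 := ℂ)]
    beta_reduce
    rw [(expSeries_summable' (𝕂 := ℂ) x).tsum_eq_zero_add,
      ← (Summable.of_norm_bounded hmaj hg).tsum_mul_right]
    simp [g, ← pow_succ]
  · rw [Real.exp_eq_exp_ℝ, exp_eq_tsum_div]
    exact tsum_of_norm_bounded hmaj.hasSum hg

end NormedSpace

namespace PositiveLinearMap

open NormedSpace

variable {A : Type*} [CStarAlgebra A] [PartialOrder A] [StarOrderedRing A]

lemma re_apply_mul_star_le (f : A →ₚ[ℂ] ℂ) (a : A) :
    (f (a * star a)).re ≤ ‖a‖ ^ 2 * (f 1).re := by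
  have h : f (a * star a) ≤ f (algebraMap ℝ A (‖a‖ ^ 2)) :=
    OrderHomClass.mono f CStarAlgebra.mul_star_le_algebraMap_norm_sq
  rw [Algebra.algebraMap_eq_smul_one, map_smul_of_tower] at h
  simpa [← Complex.ofReal_pow, Complex.re_ofReal_mul] using (Complex.le_def.mp h).1

/-- Cauchy–Schwarz for the GNS semi-inner product `⟪a, b⟫ = f (star a * b)`. -/
lemma norm_apply_mul_le (f : A →ₚ[ℂ] ℂ) (a b : A) :
    ‖f (a * b)‖ ≤ ‖a‖ * √(f 1).re * √(f (star b * b)).re := by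
  have hcs := norm_inner_le_norm (𝕜 := ℂ) (f.toPreGNS (star a)) (f.toPreGNS b)
  rw [preGNS_inner_def, preGNS_norm_def, preGNS_norm_def] at hcs
  simp only [ofPreGNS_toPreGNS, star_star] at hcs
  refine hcs.trans (mul_le_mul_of_nonneg_right ?_ (Real.sqrt_nonneg _))
  rw [← Real.sqrt_sq (norm_nonneg a), ← Real.sqrt_mul (sq_nonneg _)]
  exact Real.sqrt_le_sqrt (re_apply_mul_star_le f a)

theorem norm_apply_prod_exp_sub_one_le (f : A →ₚ[ℂ] ℂ) (hf : f 1 = 1) {r : ℕ}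
    (l : Fin r → ℂ) (a : Fin r → A) :
    ‖f (List.ofFn fun i => exp (l i • a i)).prod - 1‖ ≤
      Real.exp (∑ i, ‖l i‖ * ‖a i‖) * ∑ i, ‖l i‖ * √(f (star (a i) * a i)).re := by
  have : Nontrivial A := nontrivial_of_ne 1 0 fun h => by simp [h] at hf
  induction r with
  | zero => simp [hf]
  | succ r ih =>
    set Q := (List.ofFn fun i : Fin r => exp (l i.castSucc • a i.castSucc)).prod
    obtain ⟨b, hexp, hb⟩ :=
      exists_exp_eq_one_add_mul_and_norm_le (l (Fin.last r) • a (Fin.last r))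
    have hQ : ‖Q‖ ≤ Real.exp (∑ i : Fin r, ‖l i.castSucc‖ * ‖a i.castSucc‖) := by
      simpa [norm_smul] using norm_list_prod_exp_le fun i : Fin r => l i.castSucc • a i.castSucc
    have hsplit : f (List.ofFn fun i => exp (l i • a i)).prod - 1 =
        (f Q - 1) + l (Fin.last r) * f (Q * b * a (Fin.last r)) := by
      rw [List.ofFn_succ', List.prod_concat, hexp, mul_add, mul_one, map_add, mul_smul_comm,
        mul_smul_comm, map_smul, smul_eq_mul, mul_assoc]
      ring
    have hT : ∑ i, ‖l i‖ * ‖a i‖ =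
        ∑ i : Fin r, ‖l i.castSucc‖ * ‖a i.castSucc‖ + ‖l (Fin.last r)‖ * ‖a (Fin.last r)‖ :=
      Fin.sum_univ_castSucc _
    have hlast : ‖f (Q * b * a (Fin.last r))‖ ≤
        Real.exp (∑ i, ‖l i‖ * ‖a i‖) * √(f (star (a (Fin.last r)) * a (Fin.last r))).re := by
      refine (norm_apply_mul_le f _ _).trans ?_
      rw [hf, Complex.one_re, Real.sqrt_one, mul_one, hT, Real.exp_add, ← norm_smul]
      gcongr
      exact (norm_mul_le _ _).trans (by gcongr)
    have hinit : ‖f Q - 1‖ ≤ Real.exp (∑ i, ‖l i‖ * ‖a i‖) *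
        ∑ i : Fin r, ‖l i.castSucc‖ * √(f (star (a i.castSucc) * a i.castSucc)).re := by
      refine (ih _ _).trans ?_
      gcongr
      rw [hT]
      exact le_add_of_nonneg_right (by positivity)
    rw [hsplit, Fin.sum_univ_castSucc (f := fun i => ‖l i‖ * √(f (star (a i) * a i)).re),
      mul_add]
    refine (norm_add_le _ _).trans (add_le_add hinit ?_)
    rw [norm_mul, mul_left_comm]
    gcongr

end PositiveLinearMap

section MatrixState

open scoped MatrixOrder

variable {d : ℕ} {P : Matrix (Fin d) (Fin d) ℂ}

lemma IsProjection.posSemidef (hP : IsProjection P) : P.PosSemidef := by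
  simpa [hP.1.eq, hP.2] using Matrix.posSemidef_conjTranspose_mul_self P

lemma IsProjection.condTr_nonneg (hP : IsProjection P) {A : Matrix (Fin d) (Fin d) ℂ}
    (hA : 0 ≤ A) : 0 ≤ condTr P A := by
  have h := ((Matrix.nonneg_iff_posSemidef.1 hA).conjTranspose_mul_mul_same P).trace_nonneg
  rw [hP.1.eq] at h
  exact div_nonneg h hP.posSemidef.trace_nonneg

lemma IsProjection.condTr_one (hP : IsProjection P) (h0 : P ≠ 0) : condTr P 1 = 1 := by
  rw [condTr, mul_one, hP.2, div_self (mt hP.posSemidef.trace_eq_zero_iff.1 h0)]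

noncomputable def condTrPositiveLinearMap (hP : IsProjection P) :
    Matrix (Fin d) (Fin d) ℂ →ₚ[ℂ] ℂ :=
  .mk₀
    { toFun := condTr P
      map_add' := fun A B => by simp [condTr, Matrix.mul_add, Matrix.add_mul, add_div]
      map_smul' := fun c A => by simp [condTr, mul_div_assoc] }
    fun _ => hP.condTr_nonneg

@[simp]
lemma condTrPositiveLinearMap_apply (hP : IsProjection P) (A : Matrix (Fin d) (Fin d) ℂ) :
    condTrPositiveLinearMap hP A = condTr P A := rfl

lemma IsProjection.norm_condTr_prod_exp_sub_one_le (hP : IsProjection P) (h0 : P ≠ 0) {r : ℕ}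
    (l : Fin r → ℂ) {a : Fin r → Matrix (Fin d) (Fin d) ℂ} (ha : ∀ i, (a i).IsHermitian) :
    ‖condTr P (List.ofFn fun i => NormedSpace.exp (l i • a i)).prod - 1‖ ≤
      Real.exp (∑ i, ‖l i‖ * ‖a i‖) * ∑ i, ‖l i‖ * √(condTr P (a i * a i)).re := by
  simpa [Matrix.star_eq_conjTranspose, (ha _).eq] using
    (condTrPositiveLinearMap hP).norm_apply_prod_exp_sub_one_le (hP.condTr_one h0) l a

end MatrixState

lemma fc_sub_sq {d : ℕ} {A : Matrix (Fin d) (Fin d) ℂ} (hA : A.IsHermitian) (c : ℝ) :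
    fc (fun s => (s - c) ^ 2) A = (A - (c : ℂ) • 1) * (A - (c : ℂ) • 1) := by
  have : IsSelfAdjoint A := hA
  rw [fc, dif_pos hA, ← hA.cfc_eq, cfc_pow (fun s : ℝ => s - c) 2 A, sq,
    cfc_sub (fun s : ℝ => s) (fun _ : ℝ => c) A, cfc_id' ℝ A, cfc_const c A,
    Algebra.algebraMap_eq_smul_one, Complex.coe_smul]

open Filter Topology in
lemma ConcProj.tendsto_condTr_sub_sq {d : ℕ → ℕ} {K : Type*}
    {X : ∀ N, K → Matrix (Fin (d N)) (Fin (d N)) ℂ} {P : ∀ N, Matrix (Fin (d N)) (Fin (d N)) ℂ}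
    {x : K → ℝ} (hP : ConcProj d X P x) {k : K} (hX : ∀ N, (X N k).IsHermitian) :
    Tendsto (fun N => condTr (P N) ((X N k - (x k : ℂ) • 1) * (X N k - (x k : ℂ) • 1)))
      atTop (𝓝 0) := by
  have h := hP.2 k (fun s => (s - x k) ^ 2) (by fun_prop)
  simp only [fun N => fc_sub_sq (hX N) (x k)] at h
  rwa [sub_self, zero_pow two_ne_zero, Complex.ofReal_zero] at h

theorem exp_product_concentration_general
    (d : ℕ → ℕ) {K : Type*} (X : ∀ N, K → Matrix (Fin (d N)) (Fin (d N)) ℂ)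
    (hherm : ∀ N k, (X N k).IsHermitian)
    (hbdd : ∀ k, ∃ C : ℝ, ∀ N, ‖X N k‖ ≤ C)
    (P : ∀ N, Matrix (Fin (d N)) (Fin (d N)) ℂ) (x : K → ℝ)
    (hP : ConcProj d X P x)
    (r : ℕ) (k : Fin r → K) (l : Fin r → ℂ) :
    Filter.Tendsto
      (fun N => condTr (P N)
        ((List.ofFn fun i => NormedSpace.exp
          (l i • (X N (k i) - (x (k i) : ℂ) • (1 : Matrix (Fin (d N)) (Fin (d N)) ℂ)))).prod))
      Filter.atTop (nhds 1) := by
  set A := fun N i => X N (k i) - (x (k i) : ℂ) • (1 : Matrix (Fin (d N)) (Fin (d N)) ℂ)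
  have hA : ∀ N i, (A N i).IsHermitian := fun N i =>
    (hherm N (k i)).sub (Matrix.isHermitian_one.smul (Complex.conj_ofReal _))
  choose C hC using hbdd
  have hnorm : ∀ N i, ‖A N i‖ ≤ C (k i) + |x (k i)| := fun N i => by
    have : Nontrivial (Matrix (Fin (d N)) (Fin (d N)) ℂ) := nontrivial_of_ne _ _ (hP.1 N).2
    refine (norm_sub_le _ _).trans (add_le_add (hC _ N) ?_)
    simp [norm_smul]
  have hbound : ∀ N, ‖condTr (P N) (List.ofFn fun i => NormedSpace.exp (l i • A N i)).prod - 1‖ ≤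
      Real.exp (∑ i, ‖l i‖ * (C (k i) + |x (k i)|)) *
        ∑ i, ‖l i‖ * √(condTr (P N) (A N i * A N i)).re := fun N =>
    ((hP.1 N).1.norm_condTr_prod_exp_sub_one_le (hP.1 N).2 l (hA N)).trans
      (by gcongr; exact hnorm N _)
  have hterm : ∀ i, Filter.Tendsto (fun N => ‖l i‖ * √(condTr (P N) (A N i * A N i)).re)
      Filter.atTop (nhds 0) := fun i => by
    have h := ((Complex.continuous_re.tendsto 0).comp
      (hP.tendsto_condTr_sub_sq fun N => hherm N (k i))).sqrt.const_mul ‖l i‖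
    rwa [Complex.zero_re, Real.sqrt_zero, mul_zero] at h
  rw [tendsto_iff_norm_sub_tendsto_zero]
  refine squeeze_zero (fun _ => norm_nonneg _) hbound ?_
  simpa using (tendsto_finsetSum _ fun i _ => hterm i).const_mul _

/-- For a sequence of nonzero projections concentrating at `x`, the
normalized trace of any ordered product of exponentials
`e^{λ_{k_1}(X^N_{k_1} − x_{k_1})} ⋯ e^{λ_{k_r}(X^N_{k_r} − x_{k_r})}` tends to `1`. -/
theorem exp_product_concentration
    (d : ℕ → ℕ) {K : Type*} (X : ∀ N, K → Matrix (Fin (d N)) (Fin (d N)) ℂ)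
    (hherm : ∀ N k, (X N k).IsHermitian)
    (hbdd : ∀ k, ∃ C : ℝ, ∀ N, ‖X N k‖ ≤ C)
    (P : ∀ N, Matrix (Fin (d N)) (Fin (d N)) ℂ) (x : K → ℝ)
    (hP : ConcProj d X P x)
    (r : ℕ) (k : Fin r → K) (hk : Function.Injective k) (l : Fin r → ℂ) :
    Filter.Tendsto
      (fun N => condTr (P N)
        ((List.ofFn fun i => NormedSpace.exp
          (l i • (X N (k i) - (x (k i) : ℂ) • (1 : Matrix (Fin (d N)) (Fin (d N)) ℂ)))).prod))
      Filter.atTop (nhds 1) :=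
  exp_product_concentration_general d X hherm hbdd P x hP r k l
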